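/- Let μ₁ < μ₂, σ > 0, w₁, w₂ > 0 with w₁ + w₂ = 1, and let f = w₁·φ_{μ₁,σ} + w₂·φ_{μ₂,σ} and f̃ = w₂·φ_{μ₁,σ} + w₁·φ_{μ₂,σ}. Let a, b > 0 and 0 < ε ≤ 2a with a + b < μ₂ − μ₁, and define the prism T_{a,b,ε} = {c ∈ ℝ³ : c₁ ≤ c₂ ≤ c₃, c₁ ∈ [μ₁−a, μ₁+a−ε], c₂ ∈ [μ₁−a+ε, μ₁+a], c₃ ∈ [μ₂−b, μ₂+b]} and its symmetric version sym(T_{a,b,ε}) = {c ∈ ℝ³ : c₁ ≤ c₂ ≤ c₃, c₁ ∈ [μ₁−b, μ₁+b], c₂ ∈ [μ₂−a, μ₂+a−ε], c₃ ∈ [μ₂−a+ε, μ₂+a]}. If the one-step population k-means update (with K' = 3) maps T_{a,b,ε} into itself both under f and under f̃, then the one-step update also maps sym(T_{a,b,ε}) into itself both under f and under f̃. -/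
import Mathlib


open MeasureTheory

/-- pdf of the normal distribution with mean `μ` and standard deviation `σ`. -/
noncomputable def gpdf (μ σ x : ℝ) : ℝ :=
  (σ * Real.sqrt (2 * Real.pi))⁻¹ * Real.exp (-((x - μ) ^ 2) / (2 * σ ^ 2))

/-- center of mass of the set `s` under the density `f`. -/
noncomputable def cm (f : ℝ → ℝ) (s : Set ℝ) : ℝ :=
  (∫ x in s, x * f x) / ∫ x in s, f x

/-- One step of the population k-means update with `K' = 3` centers. -/
noncomputable def update3 (f : ℝ → ℝ) (c : ℝ × ℝ × ℝ) : ℝ × ℝ × ℝ :=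
  (cm f (Set.Iic ((c.1 + c.2.1) / 2)),
   cm f (Set.Ioc ((c.1 + c.2.1) / 2) ((c.2.1 + c.2.2) / 2)),
   cm f (Set.Ioi ((c.2.1 + c.2.2) / 2)))

/-- The prism `T_{a,b,ε}`. -/
def Tset (μ₁ μ₂ a b ε : ℝ) : Set (ℝ × ℝ × ℝ) :=
  {c | c.1 ≤ c.2.1 ∧ c.2.1 ≤ c.2.2 ∧
    c.1 ∈ Set.Icc (μ₁ - a) (μ₁ + a - ε) ∧
    c.2.1 ∈ Set.Icc (μ₁ - a + ε) (μ₁ + a) ∧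
    c.2.2 ∈ Set.Icc (μ₂ - b) (μ₂ + b)}

/-- The symmetric prism `sym(T_{a,b,ε})`. -/
def symTset (μ₁ μ₂ a b ε : ℝ) : Set (ℝ × ℝ × ℝ) :=
  {c | c.1 ≤ c.2.1 ∧ c.2.1 ≤ c.2.2 ∧
    c.1 ∈ Set.Icc (μ₁ - b) (μ₁ + b) ∧
    c.2.1 ∈ Set.Icc (μ₂ - a) (μ₂ + a - ε) ∧
    c.2.2 ∈ Set.Icc (μ₂ - a + ε) (μ₂ + a)}

/- ### Auxiliary lemmas -/

open Set

lemma gpdf_pos (μ σ x : ℝ) (hσ : 0 < σ) : 0 < gpdf μ σ x := by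
  apply mul_pos _ (Real.exp_pos _)
  rw [inv_pos]
  exact mul_pos hσ (Real.sqrt_pos.2 (by positivity))

lemma gpdf_eq (μ σ : ℝ) : gpdf μ σ
    = fun x => (σ * Real.sqrt (2 * Real.pi))⁻¹ *
      Real.exp (-(2 * σ ^ 2)⁻¹ * (x - μ) ^ 2) := by
  funext x; unfold gpdf; congr 1; ring_nf

lemma integrable_gpdf (μ σ : ℝ) (hσ : 0 < σ) : Integrable (gpdf μ σ) := by
  rw [gpdf_eq]
  exact ((integrable_exp_neg_mul_sq (by positivity)).comp_sub_right μ).const_mul _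

lemma integrable_mul_gpdf (μ σ : ℝ) (hσ : 0 < σ) :
    Integrable (fun x => x * gpdf μ σ x) := by
  have hb : (0:ℝ) < (2 * σ ^ 2)⁻¹ := by positivity
  have h1 : Integrable (fun x : ℝ => (x - μ) * Real.exp (-(2 * σ ^ 2)⁻¹ * (x - μ) ^ 2)) :=
    (integrable_mul_exp_neg_mul_sq hb).comp_sub_right μ
  have h2 : Integrable (fun x : ℝ => Real.exp (-(2 * σ ^ 2)⁻¹ * (x - μ) ^ 2)) :=
    (integrable_exp_neg_mul_sq hb).comp_sub_right μ
  have h3 := ((h1.add (h2.const_mul μ)).const_mul ((σ * Real.sqrt (2 * Real.pi))⁻¹))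
  refine h3.congr (Filter.Eventually.of_forall fun x => ?_)
  simp only [Pi.add_apply, gpdf_eq]
  ring

lemma gpdf_reflect (μ ν σ x : ℝ) : gpdf μ σ (μ + ν - x) = gpdf ν σ x := by
  unfold gpdf
  congr 2
  ring

lemma reflect_Ici (s m : ℝ) : (fun x : ℝ => s - x) ⁻¹' Set.Ici (s - m) = Set.Iic m := by
  ext x; simp only [mem_preimage, mem_Ici, mem_Iic]; constructor <;> intro h <;> linarith

lemma reflect_Iio (s m : ℝ) : (fun x : ℝ => s - x) ⁻¹' Set.Iio (s - m) = Set.Ioi m := by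
  ext x; simp only [mem_preimage, mem_Iio, mem_Ioi]; constructor <;> intro h <;> linarith

lemma reflect_Ico (s m m' : ℝ) :
    (fun x : ℝ => s - x) ⁻¹' Set.Ico (s - m') (s - m) = Set.Ioc m m' := by
  ext x; simp only [mem_preimage, mem_Ico, mem_Ioc]
  constructor <;> intro h <;> constructor <;> linarith [h.1, h.2]

lemma setIntegral_pos' (g : ℝ → ℝ) (hg : Integrable g) (hpos : ∀ x, 0 < g x)
    (A : Set ℝ) (hA0 : 0 < volume A) : 0 < ∫ x in A, g x := by
  rw [setIntegral_pos_iff_support_of_nonneg_ae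
    (Filter.Eventually.of_forall fun x => (hpos x).le) hg.integrableOn]
  have hsupp : Function.support g = Set.univ := by
    ext x; simp [Function.support, (hpos x).ne']
  rwa [hsupp, Set.univ_inter]

lemma mp_reflect (s : ℝ) : MeasurePreserving (fun x : ℝ => s - x) volume volume :=
  ⟨measurable_const.sub measurable_id, Measure.map_sub_left_eq_self volume s⟩

lemma setIntegral_reflect (s : ℝ) (g : ℝ → ℝ) (A : Set ℝ) :
    ∫ x in (fun x : ℝ => s - x) ⁻¹' A, g (s - x) = ∫ y in A, g y :=
  (mp_reflect s).setIntegral_preimage_emb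
    (MeasurableEquiv.subLeft s).measurableEmbedding g A

lemma cm_reflect (s : ℝ) (g : ℝ → ℝ) (hg : Integrable g)
    (hg' : Integrable fun x => x * g x) (A : Set ℝ)
    (hA : 0 < ∫ x in A, g x) :
    cm (fun x => g (s - x)) ((fun x : ℝ => s - x) ⁻¹' A) = s - cm g A := by
  have hnum : ∫ x in (fun x : ℝ => s - x) ⁻¹' A, x * g (s - x)
      = ∫ y in A, (s - y) * g y := by
    have h := setIntegral_reflect s (fun y => (s - y) * g y) A
    simpa [sub_sub_cancel] using h
  have hden := setIntegral_reflect s g A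
  have hsplit : ∫ y in A, (s - y) * g y
      = s * (∫ y in A, g y) - ∫ y in A, y * g y := by
    rw [← integral_const_mul, ← integral_sub ((hg.integrableOn).const_mul s) hg'.integrableOn]
    congr 1; funext y; ring
  unfold cm
  rw [hnum, hden, hsplit, sub_div, mul_div_assoc, div_self hA.ne', mul_one]

section
variable (s : ℝ) (g : ℝ → ℝ) (hg : Integrable g)
  (hg' : Integrable fun x => x * g x) (hpos : ∀ x, 0 < g x)

include hg hg' hpos

lemma cm_reflect_Iic (t : ℝ) :
    cm (fun x => g (s - x)) (Set.Iic (s - t)) = s - cm g (Set.Ioi t) := by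
  have h1 : Set.Iic (s - t) = (fun x : ℝ => s - x) ⁻¹' Set.Ici t := by
    conv_rhs => rw [← sub_sub_cancel s t]
    rw [reflect_Ici s (s - t)]
  have h2 : 0 < ∫ x in Set.Ici t, g x :=
    setIntegral_pos' g hg hpos _ (by simp [Real.volume_Ici])
  rw [h1, cm_reflect s g hg hg' _ h2]
  unfold cm
  rw [integral_Ici_eq_integral_Ioi, integral_Ici_eq_integral_Ioi]

lemma cm_reflect_Ioi (t : ℝ) :
    cm (fun x => g (s - x)) (Set.Ioi (s - t)) = s - cm g (Set.Iic t) := by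
  have h1 : Set.Ioi (s - t) = (fun x : ℝ => s - x) ⁻¹' Set.Iio t := by
    conv_rhs => rw [← sub_sub_cancel s t]
    rw [reflect_Iio s (s - t)]
  have h2 : 0 < ∫ x in Set.Iio t, g x :=
    setIntegral_pos' g hg hpos _ (by simp [Real.volume_Iio])
  rw [h1, cm_reflect s g hg hg' _ h2]
  unfold cm
  rw [integral_Iic_eq_integral_Iio, integral_Iic_eq_integral_Iio]

lemma cm_reflect_Ioc (t t' : ℝ) (htt : t < t') :
    cm (fun x => g (s - x)) (Set.Ioc (s - t') (s - t)) = s - cm g (Set.Ioc t t') := by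
  have h1 : Set.Ioc (s - t') (s - t) = (fun x : ℝ => s - x) ⁻¹' Set.Ico t t' := by
    have h := reflect_Ico s (s - t') (s - t)
    rw [sub_sub_cancel, sub_sub_cancel] at h
    exact h.symm
  have h2 : 0 < ∫ x in Set.Ico t t', g x :=
    setIntegral_pos' g hg hpos _
      (by rw [Real.volume_Ico]; exact ENNReal.ofReal_pos.2 (by linarith))
  rw [h1, cm_reflect s g hg hg' _ h2]
  unfold cm
  rw [integral_Ico_eq_integral_Ioo, integral_Ioc_eq_integral_Ioo,
    integral_Ico_eq_integral_Ioo, integral_Ioc_eq_integral_Ioo]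

lemma update3_reflect (c₁ c₂ c₃ : ℝ) (hc : c₁ < c₃) :
    update3 (fun x => g (s - x)) (s - c₃, s - c₂, s - c₁)
      = (s - (update3 g (c₁, c₂, c₃)).2.2, s - (update3 g (c₁, c₂, c₃)).2.1,
         s - (update3 g (c₁, c₂, c₃)).1) := by
  have e1 : (s - c₃ + (s - c₂)) / 2 = s - (c₂ + c₃) / 2 := by ring
  have e2 : (s - c₂ + (s - c₁)) / 2 = s - (c₁ + c₂) / 2 := by ring
  unfold update3
  simp only
  rw [e1, e2, cm_reflect_Iic s g hg hg' hpos, cm_reflect_Ioi s g hg hg' hpos,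
    cm_reflect_Ioc s g hg hg' hpos _ _ (by linarith)]

end

lemma refl_mem_Tset {μ₁ μ₂ a b ε : ℝ} {c : ℝ × ℝ × ℝ}
    (hc : c ∈ symTset μ₁ μ₂ a b ε) :
    (μ₁ + μ₂ - c.2.2, μ₁ + μ₂ - c.2.1, μ₁ + μ₂ - c.1) ∈ Tset μ₁ μ₂ a b ε := by
  obtain ⟨h1, h2, ⟨h3, h4⟩, ⟨h5, h6⟩, h7, h8⟩ := hc
  exact ⟨by simp; linarith, by simp; linarith, ⟨by simp; linarith, by simp; linarith⟩,
    ⟨by simp; linarith, by simp; linarith⟩, ⟨by simp; linarith, by simp; linarith⟩⟩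

lemma refl_mem_symTset {μ₁ μ₂ a b ε : ℝ} {c : ℝ × ℝ × ℝ}
    (hc : c ∈ Tset μ₁ μ₂ a b ε) :
    (μ₁ + μ₂ - c.2.2, μ₁ + μ₂ - c.2.1, μ₁ + μ₂ - c.1) ∈ symTset μ₁ μ₂ a b ε := by
  obtain ⟨h1, h2, ⟨h3, h4⟩, ⟨h5, h6⟩, h7, h8⟩ := hc
  exact ⟨by simp; linarith, by simp; linarith, ⟨by simp; linarith, by simp; linarith⟩,
    ⟨by simp; linarith, by simp; linarith⟩, ⟨by simp; linarith, by simp; linarith⟩⟩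

/-- if the one-step population k-means update with `K' = 3` maps
`T_{a,b,ε}` into itself both under `f = w₁·φ_{μ₁,σ} + w₂·φ_{μ₂,σ}` and under the
weight-swapped density `f̃ = w₂·φ_{μ₁,σ} + w₁·φ_{μ₂,σ}`, then it also maps
`sym(T_{a,b,ε})` into itself under both `f` and `f̃`. -/
theorem stmt4 (μ₁ μ₂ σ w₁ w₂ a b ε : ℝ)
    (hμ : μ₁ < μ₂) (hσ : 0 < σ)
    (hw₁ : 0 < w₁) (hw₂ : 0 < w₂) (hw : w₁ + w₂ = 1)
    (ha : 0 < a) (hb : 0 < b) (hε : 0 < ε) (hεa : ε ≤ 2 * a) (hab : a + b < μ₂ - μ₁)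
    (f ftilde : ℝ → ℝ)
    (hf : f = fun x => w₁ * gpdf μ₁ σ x + w₂ * gpdf μ₂ σ x)
    (hftilde : ftilde = fun x => w₂ * gpdf μ₁ σ x + w₁ * gpdf μ₂ σ x)
    (hTf : ∀ c ∈ Tset μ₁ μ₂ a b ε, update3 f c ∈ Tset μ₁ μ₂ a b ε)
    (hTftilde : ∀ c ∈ Tset μ₁ μ₂ a b ε, update3 ftilde c ∈ Tset μ₁ μ₂ a b ε) :
    (∀ c ∈ symTset μ₁ μ₂ a b ε, update3 f c ∈ symTset μ₁ μ₂ a b ε) ∧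
    (∀ c ∈ symTset μ₁ μ₂ a b ε, update3 ftilde c ∈ symTset μ₁ μ₂ a b ε) := by
  set s : ℝ := μ₁ + μ₂ with hs
  -- integrability
  have hfi : Integrable f := by
    rw [hf]
    exact ((integrable_gpdf μ₁ σ hσ).const_mul w₁).add
      ((integrable_gpdf μ₂ σ hσ).const_mul w₂)
  have hfti : Integrable ftilde := by
    rw [hftilde]
    exact ((integrable_gpdf μ₁ σ hσ).const_mul w₂).add
      ((integrable_gpdf μ₂ σ hσ).const_mul w₁)
  have hfi' : Integrable fun x => x * f x := by
    rw [hf]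
    refine (((integrable_mul_gpdf μ₁ σ hσ).const_mul w₁).add
      ((integrable_mul_gpdf μ₂ σ hσ).const_mul w₂)).congr
      (Filter.Eventually.of_forall fun x => ?_)
    simp only [Pi.add_apply]; ring
  have hfti' : Integrable fun x => x * ftilde x := by
    rw [hftilde]
    refine (((integrable_mul_gpdf μ₁ σ hσ).const_mul w₂).add
      ((integrable_mul_gpdf μ₂ σ hσ).const_mul w₁)).congr
      (Filter.Eventually.of_forall fun x => ?_)
    simp only [Pi.add_apply]; ring
  -- positivity
  have hfpos : ∀ x, 0 < f x := fun x => by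
    rw [hf]
    exact add_pos (mul_pos hw₁ (gpdf_pos _ _ _ hσ)) (mul_pos hw₂ (gpdf_pos _ _ _ hσ))
  have hftpos : ∀ x, 0 < ftilde x := fun x => by
    rw [hftilde]
    exact add_pos (mul_pos hw₂ (gpdf_pos _ _ _ hσ)) (mul_pos hw₁ (gpdf_pos _ _ _ hσ))
  -- reflection identities
  have hrefl₁ : ftilde = fun x => f (s - x) := by
    funext x
    rw [hf, hftilde]
    simp only [hs]
    rw [gpdf_reflect μ₁ μ₂ σ x, show μ₁ + μ₂ - x = μ₂ + μ₁ - x by ring,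
      gpdf_reflect μ₂ μ₁ σ x]
    ring
  have hrefl₂ : f = fun x => ftilde (s - x) := by
    funext x
    rw [hf, hftilde]
    simp only [hs]
    rw [gpdf_reflect μ₁ μ₂ σ x, show μ₁ + μ₂ - x = μ₂ + μ₁ - x by ring,
      gpdf_reflect μ₂ μ₁ σ x]
    ring
  constructor
  · -- f maps symTset into itself
    rintro ⟨c₁, c₂, c₃⟩ hc
    have h13 : c₁ < c₃ := by
      obtain ⟨_, _, ⟨_, h3⟩, ⟨h4, _⟩, h5, _⟩ := hc
      simp only at *
      linarith
    have hc' : (s - c₃, s - c₂, s - c₁) ∈ Tset μ₁ μ₂ a b ε := refl_mem_Tset hc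
    have hd := hTftilde _ hc'
    have key : update3 f (c₁, c₂, c₃)
        = (s - (update3 ftilde (s - c₃, s - c₂, s - c₁)).2.2,
           s - (update3 ftilde (s - c₃, s - c₂, s - c₁)).2.1,
           s - (update3 ftilde (s - c₃, s - c₂, s - c₁)).1) := by
      have h := update3_reflect s ftilde hfti hfti' hftpos (s - c₃) (s - c₂) (s - c₁)
        (by linarith)
      rw [sub_sub_cancel, sub_sub_cancel, sub_sub_cancel] at h
      rw [hrefl₂]
      exact h
    rw [key]
    exact refl_mem_symTset hd
  · -- ftilde maps symTset into itself
    rintro ⟨c₁, c₂, c₃⟩ hc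
    have h13 : c₁ < c₃ := by
      obtain ⟨_, _, ⟨_, h3⟩, ⟨h4, _⟩, h5, _⟩ := hc
      simp only at *
      linarith
    have hc' : (s - c₃, s - c₂, s - c₁) ∈ Tset μ₁ μ₂ a b ε := refl_mem_Tset hc
    have hd := hTf _ hc'
    have key : update3 ftilde (c₁, c₂, c₃)
        = (s - (update3 f (s - c₃, s - c₂, s - c₁)).2.2,
           s - (update3 f (s - c₃, s - c₂, s - c₁)).2.1,
           s - (update3 f (s - c₃, s - c₂, s - c₁)).1) := by
      have h := update3_reflect s f hfi hfi' hfpos (s - c₃) (s - c₂) (s - c₁)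
        (by linarith)
      rw [sub_sub_cancel, sub_sub_cancel, sub_sub_cancel] at h
      rw [hrefl₁]
      exact h
    rw [key]
    exact refl_mem_symTset hd
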